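/- If f is a homeomorphism of a compact metric space with the shadowing property whose restriction to the non-wandering set Ω(f) is expansive, then f has the L-shadowing property. -/

import Mathlib

open Filter Metric Set Topology

variable {X : Type*} [MetricSpace X]

/-- `f^k x` for `k : ℤ`, where `f` is a homeomorphism. -/
def iterZ (f : X ≃ₜ X) (k : ℤ) (x : X) : X :=
  if 0 ≤ k then (⇑f)^[k.toNat] x else (⇑f.symm)^[(-k).toNat] x

/-- The classical shadowing property. -/
def Shadowing (f : X ≃ₜ X) : Prop :=
  ∀ ε > (0:ℝ), ∃ δ > (0:ℝ), ∀ x : ℤ → X,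
    (∀ k : ℤ, dist (f (x k)) (x (k+1)) < δ) →
    ∃ z : X, ∀ k : ℤ, dist (iterZ f k z) (x k) < ε

/-- The L-shadowing property. -/
def LShadowing (f : X ≃ₜ X) : Prop :=
  ∀ ε > (0:ℝ), ∃ δ > (0:ℝ), ∀ x : ℤ → X,
    (∀ k : ℤ, dist (f (x k)) (x (k+1)) ≤ δ) →
    Tendsto (fun k : ℤ => dist (f (x k)) (x (k+1))) cofinite (nhds 0) →
    ∃ z : X, (∀ k : ℤ, dist (iterZ f k z) (x k) ≤ ε) ∧
      Tendsto (fun k : ℤ => dist (iterZ f k z) (x k)) cofinite (nhds 0)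

/-- The stable set of `x`. -/
def stableSet (f : X ≃ₜ X) (x : X) : Set X :=
  {y | Tendsto (fun n : ℕ => dist ((⇑f)^[n] x) ((⇑f)^[n] y)) atTop (nhds 0)}

/-- The unstable set of `x`. -/
def unstableSet (f : X ≃ₜ X) (x : X) : Set X := stableSet f.symm x

/-- The local stable set of size `ε` of `x`. -/
def localStable (f : X ≃ₜ X) (ε : ℝ) (x : X) : Set X :=
  {y | ∀ n : ℕ, dist ((⇑f)^[n] x) ((⇑f)^[n] y) ≤ ε}

/-- The local unstable set of size `ε` of `x`. -/
def localUnstable (f : X ≃ₜ X) (ε : ℝ) (x : X) : Set X := localStable f.symm ε x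

/-- `V^s_ε(x) = W^s(x) ∩ W^s_ε(x)`. -/
def Vs (f : X ≃ₜ X) (ε : ℝ) (x : X) : Set X := stableSet f x ∩ localStable f ε x

/-- `V^u_ε(x) = W^u(x) ∩ W^u_ε(x)`. -/
def Vu (f : X ≃ₜ X) (ε : ℝ) (x : X) : Set X := unstableSet f x ∩ localUnstable f ε x

/-- The limit shadowing property. -/
def LimitShadowing (f : X ≃ₜ X) : Prop :=
  ∀ x : ℕ → X, Tendsto (fun k : ℕ => dist (f (x k)) (x (k+1))) atTop (nhds 0) →
    ∃ y : X, Tendsto (fun k : ℕ => dist ((⇑f)^[k] y) (x k)) atTop (nhds 0)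

/-- The two-sided limit shadowing property. -/
def TwoSidedLimitShadowing (f : X ≃ₜ X) : Prop :=
  ∀ x : ℤ → X, Tendsto (fun k : ℤ => dist (f (x k)) (x (k+1))) cofinite (nhds 0) →
    ∃ y : X, Tendsto (fun k : ℤ => dist (iterZ f k y) (x k)) cofinite (nhds 0)

/-- A non-wandering point. -/
def NonWandering (f : X ≃ₜ X) (x : X) : Prop :=
  ∀ U : Set X, IsOpen U → x ∈ U → ∃ k : ℕ, 0 < k ∧ ((⇑f)^[k] '' U ∩ U).Nonempty

/-- The non-wandering set. -/
def omegaSet (f : X ≃ₜ X) : Set X := {x | NonWandering f x}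

/-- Topologically mixing. -/
def TopMixing (f : X ≃ₜ X) : Prop :=
  ∀ U V : Set X, IsOpen U → IsOpen V → U.Nonempty → V.Nonempty →
    ∃ n : ℕ, 0 < n ∧ ∀ k ≥ n, ((⇑f)^[k] '' U ∩ V).Nonempty

/-- `f` is expansive on the set `A` (as a subsystem). -/
def ExpansiveOn (f : X ≃ₜ X) (A : Set X) : Prop :=
  ∃ c > (0:ℝ), ∀ x ∈ A, ∀ y ∈ A,
    (∀ k : ℤ, dist (iterZ f k x) (iterZ f k y) ≤ c) → x = y

/-- The dynamical ball `Γ_δ(x)`. -/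
def dynBall (f : X ≃ₜ X) (δ : ℝ) (x : X) : Set X :=
  {y | ∀ k : ℤ, dist (iterZ f k x) (iterZ f k y) ≤ δ}

/-- There is a periodic `ε`-pseudo-orbit containing both `x` and `y`. -/
def ChainRel (f : X ≃ₜ X) (ε : ℝ) (x y : X) : Prop :=
  ∃ (n : ℕ) (z : ℕ → X), 0 < n ∧ z 0 = x ∧ z n = x ∧ (∃ i ≤ n, z i = y) ∧
    ∀ i < n, dist (f (z i)) (z (i+1)) < ε

/-- The chain recurrent class of `x`. -/
def chainClass (f : X ≃ₜ X) (x : X) : Set X := {y | ∀ ε > (0:ℝ), ChainRel f ε x y}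

/-- `h` is a semiconjugacy from `g` on `K` to the full shift on two symbols. -/
def SemiConjShift (g : X → X) (K : Set X) (h : X → (ℤ → Bool)) : Prop :=
  ContinuousOn h K ∧ (∀ s : ℤ → Bool, ∃ p ∈ K, h p = s) ∧
    ∀ p ∈ K, h (g p) = fun i => h p (i + 1)

/-- `f` admits arbitrarily small topological semi-horseshoes inside `C`. -/
def SmallHorseshoes (f : X ≃ₜ X) (C : Set X) : Prop :=
  ∀ ε > (0:ℝ), ∃ N : ℕ, 1 ≤ N ∧ ∃ K : Set X, K ⊆ C ∧ IsCompact K ∧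
    (⇑f)^[N] '' K = K ∧ (∀ k : ℤ, Metric.diam (iterZ f k '' K) ≤ ε) ∧
    ∃ h : X → (ℤ → Bool), SemiConjShift ((⇑f)^[N]) K h


lemma iterZ_zero (f : X ≃ₜ X) (x : X) : iterZ f 0 x = x := by simp [iterZ]

lemma iterZ_succ (f : X ≃ₜ X) (k : ℤ) (x : X) : iterZ f (k+1) x = f (iterZ f k x) := by
  rcases le_or_gt 0 k with hk | hk
  · rw [iterZ, iterZ, if_pos hk, if_pos (by omega), show (k+1).toNat = k.toNat + 1 by omega,
      Function.iterate_succ_apply']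
  · have h1 : ¬ (0 ≤ k) := by omega
    rcases eq_or_lt_of_le (by omega : k + 1 ≤ 0) with h | h
    · simp only [iterZ, if_neg h1, if_pos (le_of_eq h.symm)]
      rw [show (k+1).toNat = 0 by omega, show (-k).toNat = 1 by omega]
      simp
    · simp only [iterZ, if_neg h1, if_neg (by omega : ¬ (0:ℤ) ≤ k+1)]
      rw [show (-k).toNat = (-(k+1)).toNat + 1 by omega, Function.iterate_succ_apply']
      simp

lemma iterZ_pred (f : X ≃ₜ X) (k : ℤ) (x : X) : iterZ f (k-1) x = f.symm (iterZ f k x) := by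
  have := iterZ_succ f (k-1) x
  rw [sub_add_cancel] at this
  rw [this]; simp

lemma iterZ_add (f : X ≃ₜ X) (a b : ℤ) (x : X) :
    iterZ f (a + b) x = iterZ f a (iterZ f b x) := by
  induction a using Int.induction_on with
  | zero => simp [iterZ_zero]
  | succ n ih => rw [show (n:ℤ) + 1 + b = ((n:ℤ) + b) + 1 by ring, iterZ_succ, ih, iterZ_succ]
  | pred n ih => rw [show -(n:ℤ) - 1 + b = (-(n:ℤ) + b) - 1 by ring, iterZ_pred, ih, iterZ_pred]

lemma iterZ_natCast (f : X ≃ₜ X) (n : ℕ) (x : X) : iterZ f (n : ℤ) x = (⇑f)^[n] x := by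
  simp [iterZ]

lemma iterZ_one (f : X ≃ₜ X) (x : X) : iterZ f 1 x = f x := by
  rw [show (1:ℤ) = 0 + 1 by ring, iterZ_succ, iterZ_zero]

lemma iterZ_symm' (f : X ≃ₜ X) (k : ℤ) (x : X) : iterZ f.symm k x = iterZ f (-k) x := by
  rcases lt_trichotomy k 0 with hk | hk | hk
  · rw [iterZ, if_neg (by omega), iterZ, if_pos (by omega)]
    simp
  · simp [hk, iterZ_zero]
  · rw [iterZ, if_pos hk.le, iterZ, if_neg (by omega), neg_neg]

lemma iterZ_continuous (f : X ≃ₜ X) (k : ℤ) : Continuous (iterZ f k) := by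
  unfold iterZ
  split
  · exact f.continuous.iterate _
  · exact f.symm.continuous.iterate _

lemma nonWandering_symm (f : X ≃ₜ X) (x : X) (h : NonWandering f x) :
    NonWandering f.symm x := by
  intro U hU hxU
  obtain ⟨k, hk, y, ⟨u, hu, huy⟩, hyU⟩ := h U hU hxU
  refine ⟨k, hk, u, ⟨y, hyU, ?_⟩, hu⟩
  rw [← huy]
  exact Function.LeftInverse.iterate f.symm_apply_apply k u

lemma omegaSet_symm (f : X ≃ₜ X) : omegaSet f.symm = omegaSet f := by
  ext x
  constructor
  · intro h
    have := nonWandering_symm f.symm x h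
    rwa [Homeomorph.symm_symm] at this
  · exact nonWandering_symm f x

lemma nonWandering_of_limit (f : X ≃ₜ X) (x p : X) (m : ℕ → ℕ) (hm : StrictMono m)
    (hp : Tendsto (fun i => (⇑f)^[m i] x) atTop (nhds p)) : NonWandering f p := by
  intro U hU hpU
  have hev : ∀ᶠ i in atTop, (⇑f)^[m i] x ∈ U := hp (hU.mem_nhds hpU)
  obtain ⟨i₀, hi₀⟩ := hev.exists_forall_of_atTop
  refine ⟨m (i₀+1) - m i₀, by have := hm (by omega : i₀ < i₀ + 1); omega, (⇑f)^[m (i₀+1)] x,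
    ⟨(⇑f)^[m i₀] x, hi₀ i₀ le_rfl, ?_⟩, hi₀ (i₀+1) (Nat.le_succ _)⟩
  rw [← Function.iterate_add_apply]
  congr 1
  have := hm (by omega : i₀ < i₀ + 1)
  omega

lemma forward_asymptotic [CompactSpace X] (f : X ≃ₜ X) {c : ℝ} (hc : 0 < c)
    (hexp : ∀ p ∈ omegaSet f, ∀ q ∈ omegaSet f,
      (∀ k : ℤ, dist (iterZ f k p) (iterZ f k q) ≤ c) → p = q)
    (x y : X) (h : ∀ n : ℕ, dist ((⇑f)^[n] x) ((⇑f)^[n] y) ≤ c) :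
    Tendsto (fun n : ℕ => dist ((⇑f)^[n] x) ((⇑f)^[n] y)) atTop (nhds 0) := by
  by_contra hcon
  rw [Metric.tendsto_atTop] at hcon
  push_neg at hcon
  obtain ⟨e, he, hfreq⟩ := hcon
  have hfreq' : ∃ᶠ n in atTop, e ≤ dist ((⇑f)^[n] x) ((⇑f)^[n] y) := by
    rw [frequently_atTop]
    intro N
    obtain ⟨n, hn, hn2⟩ := hfreq N
    refine ⟨n, hn, ?_⟩
    rw [Real.dist_eq, sub_zero, abs_of_nonneg dist_nonneg] at hn2
    exact hn2
  obtain ⟨φ, hφ, hφe⟩ := Filter.extraction_of_frequently_atTop hfreq'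
  obtain ⟨p, -, φ₂, hφ₂, hp⟩ :=
    isCompact_univ.tendsto_subseq (fun i => mem_univ ((⇑f)^[φ i] x))
  obtain ⟨q, -, φ₃, hφ₃, hq⟩ :=
    isCompact_univ.tendsto_subseq (fun i => mem_univ ((⇑f)^[φ (φ₂ i)] y))
  set m : ℕ → ℕ := fun i => φ (φ₂ (φ₃ i)) with hm_def
  have hm : StrictMono m := hφ.comp (hφ₂.comp hφ₃)
  have hpx : Tendsto (fun i => (⇑f)^[m i] x) atTop (nhds p) := hp.comp hφ₃.tendsto_atTop
  have hqy : Tendsto (fun i => (⇑f)^[m i] y) atTop (nhds q) := hq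
  have hdist : Tendsto (fun i => dist ((⇑f)^[m i] x) ((⇑f)^[m i] y)) atTop
      (nhds (dist p q)) := hpx.dist hqy
  have hepq : e ≤ dist p q :=
    ge_of_tendsto hdist (Eventually.of_forall fun i => hφe (φ₂ (φ₃ i)))
  have hpΩ : p ∈ omegaSet f := nonWandering_of_limit f x p m hm hpx
  have hqΩ : q ∈ omegaSet f := nonWandering_of_limit f y q m hm hqy
  have hkey : ∀ k : ℤ, dist (iterZ f k p) (iterZ f k q) ≤ c := by
    intro k
    have h1 : Tendsto (fun i => iterZ f k ((⇑f)^[m i] x)) atTop (nhds (iterZ f k p)) :=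
      ((iterZ_continuous f k).tendsto p).comp hpx
    have h2 : Tendsto (fun i => iterZ f k ((⇑f)^[m i] y)) atTop (nhds (iterZ f k q)) :=
      ((iterZ_continuous f k).tendsto q).comp hqy
    refine le_of_tendsto (h1.dist h2) ?_
    have hev : ∀ᶠ i in atTop, (-k).toNat ≤ m i := hm.tendsto_atTop.eventually_ge_atTop _
    filter_upwards [hev] with i hi
    have h0 : 0 ≤ k + (m i : ℤ) := by omega
    have hrw : ∀ v : X, iterZ f k ((⇑f)^[m i] v) = (⇑f)^[(k + (m i : ℤ)).toNat] v := by
      intro v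
      rw [← iterZ_natCast f (m i) v, ← iterZ_add, iterZ, if_pos h0]
    rw [hrw, hrw]
    exact h (k + (m i : ℤ)).toNat
  have := hexp p hpΩ q hqΩ hkey
  rw [this] at hepq
  simp at hepq
  linarith

lemma tail_small (g : ℤ → ℝ) (h : Tendsto g cofinite (nhds 0)) {δ : ℝ} (hδ : 0 < δ) :
    ∃ A B : ℤ, ∀ k : ℤ, (k ≤ A ∨ B ≤ k) → g k < δ := by
  have hev : ∀ᶠ k in cofinite, g k < δ := h.eventually_lt_const hδ
  have hS : {k : ℤ | ¬ g k < δ}.Finite := eventually_cofinite.mp hev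
  obtain ⟨a, ha⟩ := hS.bddBelow
  obtain ⟨b, hb⟩ := hS.bddAbove
  refine ⟨a - 1, b + 1, fun k hk => ?_⟩
  by_contra hgk
  rcases hk with hk | hk
  · have := ha hgk; omega
  · have := hb hgk; omega

/-- shadowing plus expansivity of the non-wandering set implies
L-shadowing. -/
theorem lshadowing_of_shadowing_expansive_omega [CompactSpace X] (f : X ≃ₜ X)
    (hsh : Shadowing f) (hexp : ExpansiveOn f (omegaSet f)) : LShadowing f := by
  obtain ⟨c, hc, hexpc⟩ := hexp
  have hexpg : ∀ p ∈ omegaSet f.symm, ∀ q ∈ omegaSet f.symm,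
      (∀ k : ℤ, dist (iterZ f.symm k p) (iterZ f.symm k q) ≤ c) → p = q := by
    intro p hp q hq hk
    rw [omegaSet_symm] at hp hq
    refine hexpc p hp q hq (fun k => ?_)
    have := hk (-k)
    rwa [iterZ_symm', iterZ_symm', neg_neg] at this
  intro ε hε
  have hε' : 0 < min ε (c/3) := lt_min hε (by linarith)
  obtain ⟨δ₀, hδ₀, hsh₀⟩ := hsh (min ε (c/3)) hε'
  refine ⟨δ₀/2, by linarith, fun x hx hx0 => ?_⟩
  obtain ⟨z, hz⟩ := hsh₀ x (fun k => lt_of_le_of_lt (hx k) (by linarith))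
  refine ⟨z, fun k => (hz k).le.trans (min_le_left _ _), ?_⟩
  rw [Metric.tendsto_nhds]
  intro e he
  rw [eventually_cofinite]
  have hε₁ : 0 < min (c/3) (e/2) := lt_min (by linarith) (by linarith)
  set ε₁ := min (c/3) (e/2) with hε₁def
  obtain ⟨δ₁, hδ₁, hsh₁⟩ := hsh ε₁ hε₁
  obtain ⟨A, B, hAB⟩ := tail_small (fun k => dist (f (x k)) (x (k+1))) hx0 hδ₁
  -- Forward tail pseudo-orbit
  set w : ℤ → X := fun k => if 0 ≤ k then x (B + k) else iterZ f k (x B) with hw_def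
  have hwpos : ∀ k : ℤ, 0 ≤ k → w k = x (B + k) := by
    intro k hk; simp [hw_def, hk]
  have hwneg : ∀ k : ℤ, k < 0 → w k = iterZ f k (x B) := by
    intro k hk; simp [hw_def, show ¬ (0:ℤ) ≤ k by omega]
  have hw : ∀ k : ℤ, dist (f (w k)) (w (k+1)) < δ₁ := by
    intro k
    rcases le_or_gt 0 k with hk | hk
    · rw [hwpos k hk, hwpos (k+1) (by omega), show B + (k+1) = (B + k) + 1 by ring]
      exact hAB (B + k) (Or.inr (by omega))
    · rcases eq_or_lt_of_le (by omega : k + 1 ≤ 0) with h | h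
      · rw [hwneg k hk, hwpos (k+1) (le_of_eq h.symm), ← iterZ_succ, h, iterZ_zero, add_zero]
        simpa using hδ₁
      · rw [hwneg k hk, hwneg (k+1) h, iterZ_succ]
        simpa using hδ₁
  obtain ⟨y, hy⟩ := hsh₁ w hw
  have hforward : ∀ n : ℕ, dist ((⇑f)^[n] (iterZ f B z)) ((⇑f)^[n] y) ≤ c := by
    intro n
    have h1 : (⇑f)^[n] (iterZ f B z) = iterZ f ((n:ℤ) + B) z := by
      rw [iterZ_add, iterZ_natCast]
    have h2 : (⇑f)^[n] y = iterZ f (n:ℤ) y := (iterZ_natCast f n y).symm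
    have d1 : dist (iterZ f ((n:ℤ) + B) z) (x ((n:ℤ) + B)) < min ε (c/3) := hz _
    have d2 : dist (iterZ f (n:ℤ) y) (w (n:ℤ)) < ε₁ := hy _
    rw [hwpos (n:ℤ) (by positivity), show B + (n:ℤ) = (n:ℤ) + B by ring] at d2
    have t := dist_triangle ((⇑f)^[n] (iterZ f B z)) (x ((n:ℤ) + B)) ((⇑f)^[n] y)
    rw [h1, h2] at *
    rw [dist_comm (x ((n:ℤ) + B)) (iterZ f (n:ℤ) y)] at t
    have e1 : min ε (c/3) ≤ c/3 := min_le_right _ _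
    have e2 : ε₁ ≤ c/3 := min_le_left _ _
    linarith
  have htd := forward_asymptotic f hc hexpc _ _ hforward
  obtain ⟨N, hN⟩ := Metric.tendsto_atTop.1 htd (e/2) (by linarith)
  have hfwd : ∀ k : ℤ, B + N ≤ k → dist (iterZ f k z) (x k) < e := by
    intro k hk
    set n := (k - B).toNat with hn_def
    have hn1 : (n:ℤ) = k - B := by omega
    have hNn := hN n (by omega)
    rw [Real.dist_eq, sub_zero, abs_of_nonneg dist_nonneg] at hNn
    have h1 : (⇑f)^[n] (iterZ f B z) = iterZ f k z := by
      rw [← iterZ_natCast f n (iterZ f B z), ← iterZ_add, show (n:ℤ) + B = k by omega]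
    have h2 : dist (iterZ f (n:ℤ) y) (w (n:ℤ)) < ε₁ := hy _
    rw [hwpos (n:ℤ) (by positivity), show B + (n:ℤ) = k by omega] at h2
    have h3 : (⇑f)^[n] y = iterZ f (n:ℤ) y := (iterZ_natCast f n y).symm
    rw [h1, h3] at hNn
    have t := dist_triangle (iterZ f k z) (iterZ f (n:ℤ) y) (x k)
    have e2 : ε₁ ≤ e/2 := min_le_right _ _
    linarith
  -- Backward tail pseudo-orbit
  set v : ℤ → X := fun k => if k ≤ 0 then x ((A+1) + k) else iterZ f k (x (A+1)) with hv_def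
  have hvpos : ∀ k : ℤ, k ≤ 0 → v k = x ((A+1) + k) := by
    intro k hk; simp [hv_def, hk]
  have hvneg : ∀ k : ℤ, 0 < k → v k = iterZ f k (x (A+1)) := by
    intro k hk; simp [hv_def, show ¬ k ≤ 0 by omega]
  have hv : ∀ k : ℤ, dist (f (v k)) (v (k+1)) < δ₁ := by
    intro k
    rcases lt_trichotomy k 0 with hk | hk | hk
    · rw [hvpos k hk.le, hvpos (k+1) (by omega), show (A+1) + (k+1) = ((A+1) + k) + 1 by ring]
      exact hAB ((A+1) + k) (Or.inl (by omega))
    · subst hk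
      rw [zero_add, hvpos 0 le_rfl, hvneg 1 one_pos, add_zero, iterZ_one]
      simpa using hδ₁
    · rw [hvneg k hk, hvneg (k+1) (by omega), iterZ_succ]
      simpa using hδ₁
  obtain ⟨y₂, hy₂⟩ := hsh₁ v hv
  have hbackward : ∀ n : ℕ, dist ((⇑f.symm)^[n] (iterZ f (A+1) z)) ((⇑f.symm)^[n] y₂) ≤ c := by
    intro n
    have h1 : (⇑f.symm)^[n] (iterZ f (A+1) z) = iterZ f (-(n:ℤ) + (A+1)) z := by
      rw [← iterZ_natCast f.symm n, iterZ_symm', ← iterZ_add]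
    have h2 : (⇑f.symm)^[n] y₂ = iterZ f (-(n:ℤ)) y₂ := by
      rw [← iterZ_natCast f.symm n, iterZ_symm']
    have d1 : dist (iterZ f (-(n:ℤ) + (A+1)) z) (x (-(n:ℤ) + (A+1))) < min ε (c/3) := hz _
    have d2 : dist (iterZ f (-(n:ℤ)) y₂) (v (-(n:ℤ))) < ε₁ := hy₂ _
    rw [hvpos (-(n:ℤ)) (by omega), show (A+1) + -(n:ℤ) = -(n:ℤ) + (A+1) by ring] at d2
    have t := dist_triangle ((⇑f.symm)^[n] (iterZ f (A+1) z)) (x (-(n:ℤ) + (A+1)))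
      ((⇑f.symm)^[n] y₂)
    rw [h1, h2] at *
    rw [dist_comm (x (-(n:ℤ) + (A+1))) (iterZ f (-(n:ℤ)) y₂)] at t
    have e1 : min ε (c/3) ≤ c/3 := min_le_right _ _
    have e2 : ε₁ ≤ c/3 := min_le_left _ _
    linarith
  have htd₂ := forward_asymptotic f.symm hc hexpg _ _ hbackward
  obtain ⟨N₂, hN₂⟩ := Metric.tendsto_atTop.1 htd₂ (e/2) (by linarith)
  have hbwd : ∀ k : ℤ, k ≤ (A+1) - N₂ → dist (iterZ f k z) (x k) < e := by
    intro k hk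
    set n := ((A+1) - k).toNat with hn_def
    have hn1 : (n:ℤ) = (A+1) - k := by omega
    have hNn := hN₂ n (by omega)
    rw [Real.dist_eq, sub_zero, abs_of_nonneg dist_nonneg] at hNn
    have h1 : (⇑f.symm)^[n] (iterZ f (A+1) z) = iterZ f k z := by
      rw [← iterZ_natCast f.symm n, iterZ_symm', ← iterZ_add,
        show -(n:ℤ) + (A+1) = k by omega]
    have h2 : dist (iterZ f (-(n:ℤ)) y₂) (v (-(n:ℤ))) < ε₁ := hy₂ _
    rw [hvpos (-(n:ℤ)) (by omega), show (A+1) + -(n:ℤ) = k by omega] at h2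
    have h3 : (⇑f.symm)^[n] y₂ = iterZ f (-(n:ℤ)) y₂ := by
      rw [← iterZ_natCast f.symm n, iterZ_symm']
    rw [h1, h3] at hNn
    have t := dist_triangle (iterZ f k z) (iterZ f (-(n:ℤ)) y₂) (x k)
    have e2 : ε₁ ≤ e/2 := min_le_right _ _
    linarith
  refine Set.Finite.subset (Set.finite_Icc ((A+1) - N₂) (B + N)) ?_
  intro k hk
  simp only [Set.mem_setOf_eq, not_lt] at hk
  rw [Real.dist_eq, sub_zero, abs_of_nonneg dist_nonneg] at hk
  constructor
  · by_contra h
    push_neg at h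
    exact absurd hk (not_le.mpr (hbwd k (by omega)))
  · by_contra h
    push_neg at h
    exact absurd hk (not_le.mpr (hfwd k (by omega)))
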